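/- Let 1 ≤ k < d with λ_k < λ_{k+1}, and assume λ₂ > 0 (which holds by irreducibility and aperiodicity of P). Let u₁, …, u_k be Φ-orthonormal eigenvectors of L (u_iᵀΦu_j = δ_{ij}, L u_i = λ_i u_i) associated with the k smallest eigenvalues, and let û₁, …, û_k be features produced by ε-optimal GDO. Define Ψ = (u₁, …, u_k), Ψ̂ = (û₁, …, û_k), and the Φ-weighted projectors Π_Ψ^Φ = ΨΨᵀΦ and Π_{Ψ̂}^Φ = Ψ̂Ψ̂ᵀΦ. Then ‖Π_Ψ^Φ − Π_{Ψ̂}^Φ‖_Φ < √(2ε / (λ_{k+1} − λ_k)). -/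

import Mathlib

open Matrix Finset

noncomputable def phiNorm {d : ℕ} (Φ : Matrix (Fin d) (Fin d) ℝ) (x : Fin d → ℝ) : ℝ :=
  Real.sqrt (x ⬝ᵥ (Φ *ᵥ x))

noncomputable def phiOpNorm {d : ℕ} (Φ A : Matrix (Fin d) (Fin d) ℝ) : ℝ :=
  sSup { c : ℝ | ∃ x : Fin d → ℝ, x ≠ 0 ∧ c = phiNorm Φ (A *ᵥ x) / phiNorm Φ x }

/-!
Transport everything along `x ↦ (√φᵢ xᵢ)ᵢ` to Euclidean space: Φ-orthonormal families become
orthonormal, the `eⱼ = √Φ uⱼ` form an orthonormal eigenbasis of the transported `L`, and the two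
matrices become the orthogonal projections `P` onto `e₀, …, e_{k-1}` and `P̂` onto the features.
Put `bⱼ = ‖P̂ eⱼ‖² ∈ [0, 1]`, so that `∑ⱼ bⱼ = k`, and `τ = ∑_{j ≥ k} bⱼ = ∑_{j < k} (1 - bⱼ)`.
The GDO excess is `∑ⱼ λⱼ bⱼ - ∑_{j < k} λⱼ ≥ (λ_k - λ_{k-1}) τ`, while `P - P̂` is symmetric, so its
squared operator norm is at most its squared Hilbert–Schmidt norm `∑ⱼ ‖(P - P̂) eⱼ‖² = 2τ`.
-/

open scoped RealInnerProductSpace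

section Weights

variable {ι : Type*} [Fintype ι] [DecidableEq ι]

lemma sum_compl_eq_sum_one_sub (s : Finset ι) {b : ι → ℝ} (hb : ∑ j, b j = #s) :
    ∑ j ∈ sᶜ, b j = ∑ j ∈ s, (1 - b j) := by
  have := sum_add_sum_compl s b
  rw [sum_sub_distrib, sum_const, nsmul_one]
  linarith

lemma gap_mul_sum_compl_le (s : Finset ι) {lam b : ι → ℝ} {lo hi : ℝ}
    (hb0 : ∀ j, 0 ≤ b j) (hb1 : ∀ j, b j ≤ 1) (hb : ∑ j, b j = #s)
    (hlo : ∀ j ∈ s, lam j ≤ lo) (hhi : ∀ j ∉ s, hi ≤ lam j) :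
    (hi - lo) * ∑ j ∈ sᶜ, b j ≤ ∑ j, lam j * b j - ∑ j ∈ s, lam j := by
  have hin : ∑ j ∈ s, lam j * (1 - b j) ≤ lo * ∑ j ∈ sᶜ, b j := by
    rw [sum_compl_eq_sum_one_sub s hb, mul_sum]
    exact sum_le_sum fun j hj => mul_le_mul_of_nonneg_right (hlo j hj) (sub_nonneg.2 (hb1 j))
  have hout : hi * ∑ j ∈ sᶜ, b j ≤ ∑ j ∈ sᶜ, lam j * b j := by
    rw [mul_sum]
    exact sum_le_sum fun j hj => mul_le_mul_of_nonneg_right (hhi j (mem_compl.1 hj)) (hb0 j)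
  have hsplit := sum_add_sum_compl s fun j => lam j * b j
  have hdiff : ∑ j ∈ s, lam j * (1 - b j) = ∑ j ∈ s, lam j - ∑ j ∈ s, lam j * b j := by
    simp only [mul_sub, mul_one, sum_sub_distrib]
  linarith

end Weights

section InnerProductSpace

variable {E : Type*} [NormedAddCommGroup E] [InnerProductSpace ℝ E]
  {ι κ : Type*} [Fintype ι] [Fintype κ]

def orthoProj (w : κ → E) (x : E) : E := ∑ i, ⟪w i, x⟫ • w i

lemma inner_orthoProj_left (w : κ → E) (x y : E) :
    ⟪orthoProj w x, y⟫ = ∑ i, ⟪w i, x⟫ * ⟪w i, y⟫ := by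
  simp [orthoProj, sum_inner, inner_smul_left]

lemma inner_orthoProj_sub_orthoProj_comm (v w : κ → E) (x y : E) :
    ⟪orthoProj v x - orthoProj w x, y⟫ = ⟪x, orthoProj v y - orthoProj w y⟫ := by
  rw [inner_sub_left, inner_sub_right, real_inner_comm (orthoProj v y),
    real_inner_comm (orthoProj w y)]
  simp only [inner_orthoProj_left, mul_comm]

lemma orthoProj_eq_zero {w : κ → E} {x : E} (h : ∀ i, ⟪w i, x⟫ = 0) : orthoProj w x = 0 := by
  simp [orthoProj, h]

lemma Orthonormal.orthoProj_self {w : κ → E} (hw : Orthonormal ℝ w) (i : κ) :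
    orthoProj w (w i) = w i := by
  classical
  simp [orthoProj, orthonormal_iff_ite.mp hw]

lemma Orthonormal.norm_orthoProj_sq {w : κ → E} (hw : Orthonormal ℝ w) (x : E) :
    ‖orthoProj w x‖ ^ 2 = ∑ i, ⟪w i, x⟫ ^ 2 := by
  rw [← real_inner_self_eq_norm_sq, inner_orthoProj_left]
  simp only [orthoProj, hw.inner_right_fintype, sq]

lemma Orthonormal.norm_sub_orthoProj_sq {w : κ → E} (hw : Orthonormal ℝ w) (x : E) :
    ‖x - orthoProj w x‖ ^ 2 = ‖x‖ ^ 2 - ‖orthoProj w x‖ ^ 2 := by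
  have hx : ⟪x, orthoProj w x⟫ = ‖orthoProj w x‖ ^ 2 := by
    rw [real_inner_comm, inner_orthoProj_left, hw.norm_orthoProj_sq]
    simp only [sq]
  rw [norm_sub_sq_real, hx]
  ring

lemma Orthonormal.exists_orthonormalBasis_coe_eq [FiniteDimensional ℝ E] {v : ι → E}
    (hv : Orthonormal ℝ v) (hcard : Fintype.card ι = Module.finrank ℝ E) :
    ∃ e : OrthonormalBasis ι ℝ E, ⇑e = v :=
  ⟨.mk hv (hv.linearIndependent.span_eq_top_of_card_eq_finrank' hcard).ge,
    OrthonormalBasis.coe_mk _ _⟩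

lemma OrthonormalBasis.norm_apply_sq_le_sum_norm_sq_mul {T : E → E} (e : OrthonormalBasis ι ℝ E)
    (hT : ∀ x y, ⟪T x, y⟫ = ⟪x, T y⟫) (x : E) :
    ‖T x‖ ^ 2 ≤ (∑ j, ‖T (e j)‖ ^ 2) * ‖x‖ ^ 2 := by
  rw [← e.sum_sq_inner_right (T x), sum_mul]
  gcongr with j
  rw [← hT, ← sq_abs, ← mul_pow]
  gcongr
  exact abs_real_inner_le_norm _ _

variable (e : OrthonormalBasis ι ℝ E) (f : κ ↪ ι) {w : κ → E}
  {T : E →ₗ[ℝ] E} {lam : ι → ℝ} {lo hi : ℝ}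

lemma OrthonormalBasis.inner_map_self_eq_sum (hT : ∀ j, T (e j) = lam j • e j) (x : E) :
    ⟪x, T x⟫ = ∑ j, lam j * ⟪e j, x⟫ ^ 2 := by
  have hTx : T x = ∑ j, (lam j * ⟪e j, x⟫) • e j := by
    conv_lhs => rw [← e.sum_repr' x]
    simp [hT, smul_smul, mul_comm]
  rw [hTx, inner_sum]
  simp [inner_smul_right, real_inner_comm x, sq, mul_assoc]

lemma sum_norm_orthoProj_basis_sq (hw : Orthonormal ℝ w) :
    ∑ j, ‖orthoProj w (e j)‖ ^ 2 = Fintype.card κ := by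
  simp only [hw.norm_orthoProj_sq]
  rw [sum_comm]
  simp [e.sum_sq_inner_left, hw.1]

lemma sum_inner_map_self_eq (hw : Orthonormal ℝ w) (hT : ∀ j, T (e j) = lam j • e j) :
    ∑ i, ⟪w i, T (w i)⟫ = ∑ j, lam j * ‖orthoProj w (e j)‖ ^ 2 := by
  simp only [e.inner_map_self_eq_sum hT, hw.norm_orthoProj_sq, mul_sum, real_inner_comm (e _)]
  exact sum_comm

lemma sum_norm_orthoProj_sub_sq [DecidableEq ι] (hw : Orthonormal ℝ w) :
    ∑ j, ‖orthoProj (e ∘ f) (e j) - orthoProj w (e j)‖ ^ 2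
      = 2 * ∑ j ∈ (univ.map f)ᶜ, ‖orthoProj w (e j)‖ ^ 2 := by
  have hb : ∑ j, ‖orthoProj w (e j)‖ ^ 2 = #(univ.map f) := by
    rw [sum_norm_orthoProj_basis_sq e hw, card_map, card_univ]
  rw [← sum_add_sum_compl (univ.map f), sum_map, two_mul]
  congr 1
  · rw [sum_compl_eq_sum_one_sub _ hb, sum_map]
    refine sum_congr rfl fun i _ => ?_
    have : orthoProj (e ∘ f) (e (f i)) = e (f i) :=
      (e.orthonormal.comp f f.injective).orthoProj_self i
    rw [this, hw.norm_sub_orthoProj_sq, e.norm_eq_one, one_pow]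
  · refine sum_congr rfl fun j hj => ?_
    have : orthoProj (e ∘ f) (e j) = 0 := orthoProj_eq_zero fun i =>
      e.orthonormal.2 fun h => mem_compl.1 hj (h ▸ mem_map_of_mem f (mem_univ i))
    rw [this, zero_sub, norm_neg]

lemma gap_mul_sum_norm_orthoProj_compl_le [DecidableEq ι] (hw : Orthonormal ℝ w)
    (hT : ∀ j, T (e j) = lam j • e j) (hlo : ∀ i, lam (f i) ≤ lo)
    (hhi : ∀ j, j ∉ Set.range f → hi ≤ lam j) :
    (hi - lo) * ∑ j ∈ (univ.map f)ᶜ, ‖orthoProj w (e j)‖ ^ 2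
      ≤ ∑ i, ⟪w i, T (w i)⟫ - ∑ i, lam (f i) := by
  rw [sum_inner_map_self_eq e hw hT, ← sum_map univ f lam]
  refine gap_mul_sum_compl_le _ (fun j => sq_nonneg _) (fun j => ?_) ?_ ?_ ?_
  · have := hw.norm_sub_orthoProj_sq (e j)
    rw [e.norm_eq_one] at this
    nlinarith [sq_nonneg ‖e j - orthoProj w (e j)‖]
  · rw [sum_norm_orthoProj_basis_sq e hw, card_map, card_univ]
  · simpa using hlo
  · intro j hj
    exact hhi j fun ⟨i, hi⟩ => hj (hi ▸ mem_map_of_mem f (mem_univ i))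

theorem sum_le_sum_inner_map_self (hw : Orthonormal ℝ w) (hT : ∀ j, T (e j) = lam j • e j)
    (hlo : ∀ i, lam (f i) ≤ lo) (hhi : ∀ j, j ∉ Set.range f → hi ≤ lam j) (hlohi : lo ≤ hi) :
    ∑ i, lam (f i) ≤ ∑ i, ⟪w i, T (w i)⟫ := by
  classical
  have := gap_mul_sum_norm_orthoProj_compl_le e f hw hT hlo hhi
  have : 0 ≤ (hi - lo) * ∑ j ∈ (univ.map f)ᶜ, ‖orthoProj w (e j)‖ ^ 2 :=
    mul_nonneg (sub_nonneg.2 hlohi) (sum_nonneg fun j _ => sq_nonneg _)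
  linarith

theorem norm_orthoProj_sub_orthoProj_le (hw : Orthonormal ℝ w)
    (hT : ∀ j, T (e j) = lam j • e j) (hlo : ∀ i, lam (f i) ≤ lo)
    (hhi : ∀ j, j ∉ Set.range f → hi ≤ lam j) (hgap : lo < hi) (x : E) :
    ‖orthoProj (e ∘ f) x - orthoProj w x‖
      ≤ √(2 * (∑ i, ⟪w i, T (w i)⟫ - ∑ i, lam (f i)) / (hi - lo)) * ‖x‖ := by
  classical
  set τ := ∑ j ∈ (univ.map f)ᶜ, ‖orthoProj w (e j)‖ ^ 2
  have hHS : ‖orthoProj (e ∘ f) x - orthoProj w x‖ ^ 2 ≤ 2 * τ * ‖x‖ ^ 2 := by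
    rw [← sum_norm_orthoProj_sub_sq e f hw]
    exact e.norm_apply_sq_le_sum_norm_sq_mul (inner_orthoProj_sub_orthoProj_comm _ _) x
  have hτ : 2 * τ ≤ 2 * (∑ i, ⟪w i, T (w i)⟫ - ∑ i, lam (f i)) / (hi - lo) := by
    rw [le_div_iff₀ (sub_pos.2 hgap)]
    nlinarith [gap_mul_sum_norm_orthoProj_compl_le e f hw hT hlo hhi]
  rw [← Real.sqrt_sq (norm_nonneg (orthoProj (e ∘ f) x - orthoProj w x)),
    ← Real.sqrt_sq (norm_nonneg x), ← Real.sqrt_mul' _ (sq_nonneg _)]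
  exact Real.sqrt_le_sqrt (hHS.trans (by gcongr))

end InnerProductSpace

lemma Fin.le_of_notMem_range_castLEEmb {k d : ℕ} (h : k ≤ d) {j : Fin d}
    (hj : j ∉ Set.range (Fin.castLEEmb h)) : k ≤ j :=
  not_lt.1 fun hjk => hj ⟨⟨j, hjk⟩, rfl⟩

lemma phiOpNorm_le {d : ℕ} {Φ A : Matrix (Fin d) (Fin d) ℝ} {c : ℝ} (hc : 0 ≤ c)
    (h : ∀ x, phiNorm Φ (A *ᵥ x) ≤ c * phiNorm Φ x) : phiOpNorm Φ A ≤ c := by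
  refine Real.sSup_le ?_ hc
  rintro _ ⟨x, -, rfl⟩
  exact div_le_of_le_mul₀ (Real.sqrt_nonneg _) hc (h x)

section Weighted

variable {d : ℕ} {φ : Fin d → ℝ}

noncomputable def weightedEquiv (hφ : ∀ i, 0 < φ i) :
    (Fin d → ℝ) ≃ₗ[ℝ] EuclideanSpace ℝ (Fin d) :=
  (LinearEquiv.piCongrRight fun i =>
    LinearEquiv.smulOfNeZero ℝ ℝ (√(φ i)) (Real.sqrt_pos.2 (hφ i)).ne').trans
    (WithLp.linearEquiv 2 ℝ (Fin d → ℝ)).symm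

variable (hφ : ∀ i, 0 < φ i)

lemma weightedEquiv_apply (x : Fin d → ℝ) :
    weightedEquiv hφ x = WithLp.toLp 2 (fun i => √(φ i) * x i) := rfl

lemma inner_weightedEquiv (x y : Fin d → ℝ) :
    ⟪weightedEquiv hφ x, weightedEquiv hφ y⟫ = x ⬝ᵥ (diagonal φ *ᵥ y) := by
  rw [weightedEquiv_apply, weightedEquiv_apply, EuclideanSpace.inner_toLp_toLp]
  refine sum_congr rfl fun i _ => ?_
  rw [star_trivial, mulVec_diagonal]
  linear_combination (x i * y i) * Real.mul_self_sqrt (hφ i).le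

lemma phiNorm_diagonal (x : Fin d → ℝ) : phiNorm (diagonal φ) x = ‖weightedEquiv hφ x‖ := by
  rw [phiNorm, ← inner_weightedEquiv hφ, real_inner_self_eq_norm_sq, Real.sqrt_sq (norm_nonneg _)]

lemma orthonormal_weightedEquiv_comp {ι : Type*} [DecidableEq ι] {u : ι → Fin d → ℝ}
    (hu : ∀ i j, u i ⬝ᵥ (diagonal φ *ᵥ u j) = if i = j then 1 else 0) :
    Orthonormal ℝ (weightedEquiv hφ ∘ u) :=
  orthonormal_iff_ite.2 fun i j => (inner_weightedEquiv hφ _ _).trans (hu i j)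

lemma mulVec_weightedProj {κ : Type*} [Fintype κ] (w : κ → Fin d → ℝ) (x : Fin d → ℝ) :
    (of (fun s i => w i s) * (of fun s i => w i s)ᵀ * diagonal φ) *ᵥ x
      = ∑ i, (w i ⬝ᵥ (diagonal φ *ᵥ x)) • w i := by
  ext s
  rw [← mulVec_mulVec, ← mulVec_mulVec]
  simp only [mulVec, dotProduct, of_apply, transpose_apply, Finset.sum_apply, Pi.smul_apply,
    smul_eq_mul, sum_mul, mul_sum]
  exact sum_congr rfl fun i _ => sum_congr rfl fun t _ => sum_congr rfl fun r _ => by ring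

lemma weightedEquiv_mulVec_proj {κ : Type*} [Fintype κ] (w : κ → Fin d → ℝ) (x : Fin d → ℝ) :
    weightedEquiv hφ ((of (fun s i => w i s) * (of fun s i => w i s)ᵀ * diagonal φ) *ᵥ x)
      = orthoProj (weightedEquiv hφ ∘ w) (weightedEquiv hφ x) := by
  simp [mulVec_weightedProj, orthoProj, inner_weightedEquiv]

end Weighted

theorem stmt3 {d : ℕ}
    (φ : Fin d → ℝ)
    (hφ_pos : ∀ i, 0 < φ i)
    (Φ : Matrix (Fin d) (Fin d) ℝ) (hΦ : Φ = Matrix.diagonal φ)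
    (L : Matrix (Fin d) (Fin d) ℝ)
    (lam : Fin d → ℝ) (u : Fin d → Fin d → ℝ)
    (hlam_mono : Monotone lam)
    (h_eig : ∀ i, L *ᵥ u i = lam i • u i)
    (h_orth : ∀ i j, (u i) ⬝ᵥ (Φ *ᵥ u j) = if i = j then 1 else 0)
    (k : ℕ) (hkd : k < d)
    (hgap : lam ⟨k - 1, by omega⟩ < lam ⟨k, hkd⟩)
    (ε : ℝ)
    (uhat : Fin k → Fin d → ℝ)
    (huhat_orth : ∀ i j, (uhat i) ⬝ᵥ (Φ *ᵥ uhat j) = if i = j then 1 else 0)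
    (huhat_gdo : ∑ i, (uhat i) ⬝ᵥ (Φ *ᵥ (L *ᵥ uhat i))
        - ∑ i : Fin k, lam (Fin.castLE hkd.le i) < ε)
    (Ψ : Matrix (Fin d) (Fin k) ℝ)
    (hΨ : Ψ = Matrix.of fun s i => u (Fin.castLE hkd.le i) s)
    (Ψhat : Matrix (Fin d) (Fin k) ℝ)
    (hΨhat : Ψhat = Matrix.of fun s i => uhat i s) :
    phiOpNorm Φ (Ψ * Ψᵀ * Φ - Ψhat * Ψhatᵀ * Φ)
      < Real.sqrt (2 * ε / (lam ⟨k, hkd⟩ - lam ⟨k - 1, by omega⟩)) := by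
  subst hΦ
  obtain ⟨e, he⟩ := (orthonormal_weightedEquiv_comp hφ_pos h_orth).exists_orthonormalBasis_coe_eq
    (by simp)
  set S := weightedEquiv hφ_pos
  set T := S.conj (toLin' L)
  have hTS : ∀ y, T (S y) = S (L *ᵥ y) := fun y => by simp [T, LinearEquiv.conj_apply_apply]
  have hT : ∀ j, T (e j) = lam j • e j := fun j => by
    rw [he, Function.comp_apply, hTS, h_eig, map_smul]
  set f := Fin.castLEEmb hkd.le
  have hlo : ∀ i, lam (f i) ≤ lam ⟨k - 1, by omega⟩ := fun i =>
    hlam_mono (show (i : ℕ) ≤ k - 1 by omega)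
  have hhi : ∀ j, j ∉ Set.range f → lam ⟨k, hkd⟩ ≤ lam j := fun j hj =>
    hlam_mono (Fin.le_of_notMem_range_castLEEmb hkd.le hj)
  have hw := orthonormal_weightedEquiv_comp hφ_pos huhat_orth
  have hM : ∀ x, S ((Ψ * Ψᵀ * diagonal φ - Ψhat * Ψhatᵀ * diagonal φ) *ᵥ x)
      = orthoProj (e ∘ f) (S x) - orthoProj (S ∘ uhat) (S x) := fun x => by
    rw [hΨ, hΨhat, sub_mulVec, map_sub, weightedEquiv_mulVec_proj, weightedEquiv_mulVec_proj, he]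
    rfl
  have hδ : ∑ i, ⟪S (uhat i), T (S (uhat i))⟫ - ∑ i, lam (f i) < ε := by
    convert huhat_gdo using 3 with i
    · rw [hTS, inner_weightedEquiv]
    · rfl
  have hKF := sum_le_sum_inner_map_self e f hw hT hlo hhi hgap.le
  have hgap' := sub_pos.2 hgap
  calc _ ≤ √(2 * (∑ i, ⟪S (uhat i), T (S (uhat i))⟫ - ∑ i, lam (f i))
        / (lam ⟨k, hkd⟩ - lam ⟨k - 1, by omega⟩)) :=
      phiOpNorm_le (Real.sqrt_nonneg _) fun x => by
        rw [phiNorm_diagonal hφ_pos, phiNorm_diagonal hφ_pos, hM]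
        exact norm_orthoProj_sub_orthoProj_le e f hw hT hlo hhi hgap (S x)
    _ < _ := Real.sqrt_lt_sqrt (by positivity) (by gcongr)
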